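/- For continuous f, g : [0,1] → ℝ with f nonvanishing, if h = f·g then dim_B̄ G(g) ≤ max{dim_B̄ G(h), dim_B̄ G(f)}. -/

import Mathlib

open Set Filter Metric

noncomputable def coverNum {α : Type*} [PseudoMetricSpace α] (F : Set α) (δ : ℝ) : ℕ :=
  sInf {n : ℕ | ∃ t : Finset α, t.card = n ∧ F ⊆ ⋃ p ∈ t, Metric.closedBall p δ}

noncomputable def upperBoxDim {α : Type*} [PseudoMetricSpace α] (F : Set α) : ℝ :=
  Filter.limsup (fun δ : ℝ => Real.log (coverNum F δ) / -Real.log δ)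
    (nhdsWithin (0 : ℝ) (Set.Ioi 0))

noncomputable def lowerBoxDim {α : Type*} [PseudoMetricSpace α] (F : Set α) : ℝ :=
  Filter.liminf (fun δ : ℝ => Real.log (coverNum F δ) / -Real.log δ)
    (nhdsWithin (0 : ℝ) (Set.Ioi 0))

/-- Graph of `f` over the set `X`. -/
def fnGraphOn (f : ℝ → ℝ) (X : Set ℝ) : Set (ℝ × ℝ) := (fun x => (x, f x)) '' X

/-- Graph of `f` over `[0,1]`. -/
def G (f : ℝ → ℝ) : Set (ℝ × ℝ) := fnGraphOn f (Set.Icc 0 1)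

/-!
Cut `[0,1]` into `n ≈ 1/δ` columns of width `1/n`. Up to a factor `12`, the number of `δ`-balls
needed to cover the graph of a continuous `u` is `∑ i, (diam (u '' column i) / 2δ + 1)`: each
column needs that many balls, and one ball meets at most six columns. Where `m ≤ |f|` and
`|f g| ≤ B`, the identity `g x - g y = (fg x - fg y) / f y + fg x (f y - f x) / (f x f y)` bounds
the oscillation of `g` on a column by a constant times those of `f g` and `f`. Hence
`N(G g, δ) ≤ K max (N(G (f g), δ), N(G f, δ))`, and a constant factor does not change the upper box
dimension.
-/

open scoped Topology

section CoverNum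

variable {α β : Type*} [PseudoMetricSpace α] [PseudoMetricSpace β]

lemma coverNum_le_card {F : Set α} {δ : ℝ} {t : Finset α}
    (h : F ⊆ ⋃ p ∈ t, closedBall p δ) : coverNum F δ ≤ t.card :=
  Nat.sInf_le ⟨t, rfl, h⟩

lemma TotallyBounded.exists_cover_card_eq_coverNum {F : Set α} (hF : TotallyBounded F) {δ : ℝ}
    (hδ : 0 < δ) : ∃ t : Finset α, t.card = coverNum F δ ∧ F ⊆ ⋃ p ∈ t, closedBall p δ := by
  obtain ⟨t, ht, hcov⟩ := totallyBounded_iff.1 hF δ hδ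
  refine Nat.sInf_mem (s := {n | ∃ t : Finset α, t.card = n ∧ F ⊆ ⋃ p ∈ t, closedBall p δ})
    ⟨ht.toFinset.card, ht.toFinset, rfl, hcov.trans ?_⟩
  simp only [Set.Finite.mem_toFinset]
  exact iUnion₂_mono fun p _ => ball_subset_closedBall

lemma coverNum_mono {F F' : Set α} (hF' : TotallyBounded F') (h : F ⊆ F') {δ : ℝ} (hδ : 0 < δ) :
    coverNum F δ ≤ coverNum F' δ := by
  obtain ⟨t, ht_card, ht_cover⟩ := hF'.exists_cover_card_eq_coverNum hδ
  exact ht_card ▸ coverNum_le_card (h.trans ht_cover)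

lemma coverNum_le_sum_of_subset_biUnion {ι : Type*} {F : Set α} {I : Finset ι} {A : ι → Set α}
    (hA : ∀ i ∈ I, TotallyBounded (A i)) (hF : F ⊆ ⋃ i ∈ I, A i) {δ : ℝ} (hδ : 0 < δ) :
    coverNum F δ ≤ ∑ i ∈ I, coverNum (A i) δ := by
  classical
  choose! t ht_card ht_cover using fun i hi => (hA i hi).exists_cover_card_eq_coverNum hδ
  calc coverNum F δ ≤ (I.biUnion t).card := coverNum_le_card <| hF.trans <| iUnion₂_subset
        fun i hi => (ht_cover i hi).trans <| iUnion₂_subset fun p hp =>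
          subset_biUnion_of_mem (u := fun p => closedBall p δ) (Finset.mem_biUnion.2 ⟨i, hi, hp⟩)
    _ ≤ ∑ i ∈ I, (t i).card := Finset.card_biUnion_le
    _ = ∑ i ∈ I, coverNum (A i) δ := Finset.sum_congr rfl ht_card

lemma coverNum_prod_le {A : Set α} {B : Set β} (hA : TotallyBounded A) (hB : TotallyBounded B)
    {δ : ℝ} (hδ : 0 < δ) : coverNum (A ×ˢ B) δ ≤ coverNum A δ * coverNum B δ := by
  obtain ⟨s, hs_card, hs_cover⟩ := hA.exists_cover_card_eq_coverNum hδ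
  obtain ⟨t, ht_card, ht_cover⟩ := hB.exists_cover_card_eq_coverNum hδ
  rw [← hs_card, ← ht_card, ← Finset.card_product]
  refine coverNum_le_card fun z ⟨hz₁, hz₂⟩ => ?_
  obtain ⟨p, hp, hzp⟩ := mem_iUnion₂.1 (hs_cover hz₁)
  obtain ⟨q, hq, hzq⟩ := mem_iUnion₂.1 (ht_cover hz₂)
  exact mem_iUnion₂.2 ⟨(p, q), Finset.mem_product.2 ⟨hp, hq⟩,
    (closedBall_prod_same p q δ).symm ▸ ⟨hzp, hzq⟩⟩

lemma coverNum_closedBall_le (x : α) (δ : ℝ) : coverNum (closedBall x δ) δ ≤ 1 :=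
  coverNum_le_card (t := {x}) (by simp)

lemma coverNum_Icc_le (a b : ℝ) {δ : ℝ} (hδ : 0 < δ) :
    coverNum (Icc a b) δ ≤ ⌊(b - a) / (2 * δ)⌋₊ + 1 := by
  classical
  refine (coverNum_le_card (t := (Finset.range (⌊(b - a) / (2 * δ)⌋₊ + 1)).image
    fun k : ℕ => a + δ + 2 * δ * k) fun y hy => ?_).trans Finset.card_image_le |>.trans_eq
    (Finset.card_range _)
  have hyk : 0 ≤ (y - a) / (2 * δ) := div_nonneg (by linarith [hy.1]) (by positivity)
  set k := ⌊(y - a) / (2 * δ)⌋₊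
  have hk_le : 2 * δ * k ≤ y - a := by
    have := Nat.floor_le hyk; rwa [le_div_iff₀ (by positivity), mul_comm] at this
  have hk_lt : y - a < 2 * δ * (k + 1) := by
    have := Nat.lt_floor_add_one ((y - a) / (2 * δ))
    rwa [div_lt_iff₀ (by positivity), mul_comm] at this
  refine mem_iUnion₂.2 ⟨a + δ + 2 * δ * k, Finset.mem_image_of_mem _ (Finset.mem_range.2
    (Nat.lt_succ_of_le (Nat.floor_le_floor (by gcongr; exact hy.2)))), ?_⟩
  rw [Real.closedBall_eq_Icc]
  constructor <;> linarith

end CoverNum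

lemma isCompact_fnGraphOn {u : ℝ → ℝ} {s : Set ℝ} (hs : IsCompact s) (hu : ContinuousOn u s) :
    IsCompact (fnGraphOn u s) :=
  hs.image_of_continuousOn (continuousOn_id.prodMk hu)

lemma sub_le_card_mul_of_Icc_subset {ι : Type*} {a b δ : ℝ} (hδ : 0 ≤ δ) {t : Finset ι}
    {y : ι → ℝ} (h : Icc a b ⊆ ⋃ i ∈ t, closedBall (y i) δ) : b - a ≤ t.card * (2 * δ) := by
  have hvol : ENNReal.ofReal (b - a) ≤ ENNReal.ofReal (t.card * (2 * δ)) := by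
    calc ENNReal.ofReal (b - a) = MeasureTheory.volume (Icc a b) := (Real.volume_Icc).symm
      _ ≤ ∑ i ∈ t, MeasureTheory.volume (closedBall (y i) δ) :=
        (MeasureTheory.measure_mono h).trans (MeasureTheory.measure_biUnion_finset_le _ _)
      _ = ENNReal.ofReal (t.card * (2 * δ)) := by
        simp only [Real.volume_closedBall, Finset.sum_const, nsmul_eq_mul]
        rw [ENNReal.ofReal_mul (Nat.cast_nonneg _), ENNReal.ofReal_natCast]
  exact (ENNReal.ofReal_le_ofReal_iff (by positivity)).1 hvol

lemma diam_image_le_of_fnGraphOn_subset {u : ℝ → ℝ} {a b : ℝ} (hab : a ≤ b)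
    (hu : ContinuousOn u (Icc a b)) {δ : ℝ} (hδ : 0 ≤ δ) {t : Finset (ℝ × ℝ)}
    (ht : fnGraphOn u (Icc a b) ⊆ ⋃ p ∈ t, closedBall p δ) :
    diam (u '' Icc a b) ≤ t.card * (2 * δ) := by
  rw [Real.diam_eq (isCompact_Icc.image_of_continuousOn hu).isBounded]
  refine sub_le_card_mul_of_Icc_subset (y := Prod.snd) hδ ?_
  rw [← hu.image_Icc hab]
  rintro _ ⟨x, hx, rfl⟩
  obtain ⟨p, hp, hxp⟩ := mem_iUnion₂.1 (ht ⟨x, hx, rfl⟩)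
  exact mem_iUnion₂.2 ⟨p, hp, mem_closedBall.2 ((le_max_right _ _).trans (mem_closedBall.1 hxp))⟩

lemma div_add_one_le_of_fnGraphOn_subset {u : ℝ → ℝ} {a b : ℝ} (hab : a ≤ b)
    (hu : ContinuousOn u (Icc a b)) {δ : ℝ} (hδ : 0 < δ) {t : Finset (ℝ × ℝ)}
    (ht : fnGraphOn u (Icc a b) ⊆ ⋃ p ∈ t, closedBall p δ) :
    diam (u '' Icc a b) / (2 * δ) + 1 ≤ 2 * t.card := by
  have hdiam := (div_le_iff₀ (by positivity)).2 (diam_image_le_of_fnGraphOn_subset hab hu hδ.le ht)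
  obtain ⟨p, hp, -⟩ := mem_iUnion₂.1 (ht ⟨a, left_mem_Icc.2 hab, rfl⟩)
  have hone : (1 : ℝ) ≤ t.card := by exact_mod_cast Finset.card_pos.2 ⟨p, hp⟩
  linarith

def column (n i : ℕ) : Set ℝ := Icc (i / n) ((i + 1) / n)

lemma column_nonempty (n i : ℕ) : (column n i).Nonempty :=
  nonempty_Icc.2 (div_le_div_of_nonneg_right (by linarith) (Nat.cast_nonneg n))

lemma column_subset_Icc {n i : ℕ} (hi : i < n) : column n i ⊆ Icc 0 1 := by
  have hn : (0 : ℝ) < n := by exact_mod_cast hi.trans_le' (Nat.zero_le i)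
  refine Icc_subset_Icc (by positivity) ((div_le_one hn).2 ?_)
  exact_mod_cast hi

lemma column_subset_closedBall (n i : ℕ) :
    column n i ⊆ closedBall (((i : ℝ) + 1 / 2) / n) (1 / (2 * n)) := by
  rw [Real.closedBall_eq_Icc, column]
  apply Icc_subset_Icc <;> apply le_of_eq <;> ring

lemma Icc_subset_biUnion_column {n : ℕ} (hn : 0 < n) :
    Icc (0 : ℝ) 1 ⊆ ⋃ i ∈ Finset.range n, column n i := by
  intro x hx
  have hn' : (0 : ℝ) < n := by exact_mod_cast hn
  set i := min ⌊x * n⌋₊ (n - 1)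
  have hi : i < n := (min_le_right _ _).trans_lt (Nat.sub_lt hn one_pos)
  refine mem_iUnion₂.2 ⟨i, Finset.mem_range.2 hi, ?_, ?_⟩
  · rw [div_le_iff₀ hn']
    exact (Nat.cast_le.2 (min_le_left _ _)).trans (Nat.floor_le (mul_nonneg hx.1 hn'.le))
  · rw [le_div_iff₀ hn']
    change x * n ≤ ((min ⌊x * n⌋₊ (n - 1) : ℕ) : ℝ) + 1
    rcases min_cases ⌊x * n⌋₊ (n - 1) with ⟨h, _⟩ | ⟨h, _⟩
    · rw [h]; exact (Nat.lt_floor_add_one _).le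
    · rw [h, Nat.cast_sub hn, Nat.cast_one, sub_add_cancel]
      nlinarith [hx.2]

lemma card_le_six_of_forall_column_near {n : ℕ} (hn : 0 < n) {δ x₀ : ℝ} (hnδ : n * δ ≤ 2)
    {S : Finset ℕ} (hS : ∀ i ∈ S, ∃ x ∈ column n i, dist x x₀ ≤ δ) : S.card ≤ 6 := by
  rcases S.eq_empty_or_nonempty with rfl | hne
  · simp
  set j := S.min' hne
  obtain ⟨xj, hxj, hdj⟩ := hS j (S.min'_mem hne)
  suffices S ⊆ Finset.Icc j (j + 5) from (Finset.card_le_card this).trans (by simp; omega)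
  intro i hi
  obtain ⟨xi, hxi, hdi⟩ := hS i hi
  have hn' : (0 : ℝ) < n := by exact_mod_cast hn
  rw [Real.dist_eq, abs_le] at hdi hdj
  have h₁ : (i : ℝ) / n ≤ (j + 1) / n + 2 * δ := by linarith [hxi.1, hxj.2]
  rw [div_le_iff₀ hn', add_mul, div_mul_cancel₀ _ hn'.ne'] at h₁
  have : (i : ℝ) ≤ j + 5 := by nlinarith
  exact Finset.mem_Icc.2 ⟨S.min'_le i hi, by exact_mod_cast this⟩

noncomputable def oscSum (u : ℝ → ℝ) (n : ℕ) (δ : ℝ) : ℝ :=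
  ∑ i ∈ Finset.range n, (diam (u '' column n i) / (2 * δ) + 1)

lemma isBounded_image_column {u : ℝ → ℝ} (hu : ContinuousOn u (Icc 0 1)) {n i : ℕ} (hi : i < n) :
    Bornology.IsBounded (u '' column n i) :=
  (isCompact_Icc.image_of_continuousOn (hu.mono (column_subset_Icc hi))).isBounded

lemma coverNum_fnGraphOn_column_le {u : ℝ → ℝ} (hu : ContinuousOn u (Icc 0 1)) {n i : ℕ}
    (hi : i < n) {δ : ℝ} (hδ : 0 < δ) (hnδ : (n : ℝ)⁻¹ ≤ 2 * δ) :
    coverNum (fnGraphOn u (column n i)) δ ≤ ⌊diam (u '' column n i) / (2 * δ)⌋₊ + 1 := by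
  have hbdd := isBounded_image_column hu hi
  set a := sInf (u '' column n i)
  set b := sSup (u '' column n i)
  have hsub : fnGraphOn u (column n i) ⊆ closedBall (((i : ℝ) + 1 / 2) / n) δ ×ˢ Icc a b := by
    rintro _ ⟨x, hx, rfl⟩
    refine ⟨closedBall_subset_closedBall ?_ (column_subset_closedBall n i hx),
      hbdd.subset_Icc_sInf_sSup ⟨x, hx, rfl⟩⟩
    rw [one_div, mul_inv]; linarith
  calc coverNum (fnGraphOn u (column n i)) δ
      ≤ coverNum (closedBall (((i : ℝ) + 1 / 2) / n) δ ×ˢ Icc a b) δ :=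
        coverNum_mono ((isCompact_closedBall _ _).prod isCompact_Icc).totallyBounded hsub hδ
    _ ≤ 1 * (⌊(b - a) / (2 * δ)⌋₊ + 1) :=
        (coverNum_prod_le (isCompact_closedBall _ _).totallyBounded isCompact_Icc.totallyBounded
          hδ).trans (Nat.mul_le_mul (coverNum_closedBall_le _ _) (coverNum_Icc_le _ _ hδ))
    _ = ⌊diam (u '' column n i) / (2 * δ)⌋₊ + 1 := by rw [one_mul, Real.diam_eq hbdd]

lemma coverNum_graph_le_oscSum {u : ℝ → ℝ} (hu : ContinuousOn u (Icc 0 1)) {n : ℕ} (hn : 0 < n)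
    {δ : ℝ} (hδ : 0 < δ) (hnδ : (n : ℝ)⁻¹ ≤ 2 * δ) : (coverNum (G u) δ : ℝ) ≤ oscSum u n δ := by
  have hsub : G u ⊆ ⋃ i ∈ Finset.range n, fnGraphOn u (column n i) := by
    rintro _ ⟨x, hx, rfl⟩
    obtain ⟨i, hi, hxi⟩ := mem_iUnion₂.1 (Icc_subset_biUnion_column hn hx)
    exact mem_iUnion₂.2 ⟨i, hi, x, hxi, rfl⟩
  have hcount : coverNum (G u) δ ≤
      ∑ i ∈ Finset.range n, (⌊diam (u '' column n i) / (2 * δ)⌋₊ + 1) :=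
    (coverNum_le_sum_of_subset_biUnion (fun i hi => (isCompact_fnGraphOn isCompact_Icc
      (hu.mono (column_subset_Icc (Finset.mem_range.1 hi)))).totallyBounded) hsub hδ).trans
      (Finset.sum_le_sum fun i hi =>
        coverNum_fnGraphOn_column_le hu (Finset.mem_range.1 hi) hδ hnδ)
  calc (coverNum (G u) δ : ℝ)
      ≤ ∑ i ∈ Finset.range n, ((⌊diam (u '' column n i) / (2 * δ)⌋₊ : ℝ) + 1) := by
        exact_mod_cast hcount
    _ ≤ oscSum u n δ :=
        Finset.sum_le_sum fun i _ => by gcongr; exact Nat.floor_le (by positivity)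

lemma oscSum_le_coverNum_graph {u : ℝ → ℝ} (hu : ContinuousOn u (Icc 0 1)) {n : ℕ} (hn : 0 < n)
    {δ : ℝ} (hδ : 0 < δ) (hnδ : n * δ ≤ 2) : oscSum u n δ ≤ 12 * coverNum (G u) δ := by
  classical
  obtain ⟨t, ht_card, ht_cover⟩ : ∃ t : Finset (ℝ × ℝ),
      t.card = coverNum (G u) δ ∧ G u ⊆ ⋃ p ∈ t, closedBall p δ :=
    (isCompact_fnGraphOn isCompact_Icc hu).totallyBounded.exists_cover_card_eq_coverNum hδ
  set r : ℕ → ℝ × ℝ → Prop := fun i p => ∃ x ∈ column n i, (x, u x) ∈ closedBall p δ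
  have hcolumn : ∀ i ∈ Finset.range n,
      diam (u '' column n i) / (2 * δ) + 1 ≤ 2 * (t.bipartiteAbove r i).card := by
    intro i hi
    refine div_add_one_le_of_fnGraphOn_subset (nonempty_Icc.1 (column_nonempty n i))
      (hu.mono (column_subset_Icc (Finset.mem_range.1 hi))) hδ ?_
    rintro _ ⟨x, hx, rfl⟩
    obtain ⟨p, hp, hxp⟩ := mem_iUnion₂.1
      (ht_cover ⟨x, column_subset_Icc (Finset.mem_range.1 hi) hx, rfl⟩)
    exact mem_iUnion₂.2 ⟨p, Finset.mem_filter.2 ⟨hp, x, hx, hxp⟩, hxp⟩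
  have hrow : ∀ p ∈ t, ((Finset.range n).bipartiteBelow r p).card ≤ 6 := fun p _ =>
    card_le_six_of_forall_column_near hn hnδ fun i hi => by
      obtain ⟨x, hx, hxp⟩ := (Finset.mem_filter.1 hi).2
      exact ⟨x, hx, (le_max_left _ _).trans (mem_closedBall.1 hxp)⟩
  calc oscSum u n δ ≤ ∑ i ∈ Finset.range n, 2 * ((t.bipartiteAbove r i).card : ℝ) :=
        Finset.sum_le_sum hcolumn
    _ = 2 * ((∑ i ∈ Finset.range n, (t.bipartiteAbove r i).card : ℕ) : ℝ) := by
        push_cast; rw [Finset.mul_sum]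
    _ = 2 * ((∑ p ∈ t, ((Finset.range n).bipartiteBelow r p).card : ℕ) : ℝ) := by
        rw [Finset.sum_card_bipartiteAbove_eq_sum_card_bipartiteBelow]
    _ ≤ 2 * ((t.card * 6 : ℕ) : ℝ) := by
        gcongr; exact Finset.sum_le_card_nsmul _ _ _ hrow
    _ = 12 * coverNum (G u) δ := by rw [ht_card]; push_cast; ring

section BoxDim

variable {α β γ : Type*} [PseudoMetricSpace α] [PseudoMetricSpace β] [PseudoMetricSpace γ]

noncomputable def coverRatio (F : Set α) (δ : ℝ) : ℝ := Real.log (coverNum F δ) / -Real.log δ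

lemma coverRatio_nonneg (F : Set α) {δ : ℝ} (h0 : 0 ≤ δ) (h1 : δ ≤ 1) : 0 ≤ coverRatio F δ :=
  div_nonneg (Real.log_natCast_nonneg _) (neg_nonneg.2 (Real.log_nonpos h0 h1))

lemma tendsto_div_neg_log_nhdsGT_zero (c : ℝ) :
    Tendsto (fun δ => c / -Real.log δ) (𝓝[>] 0) (𝓝 0) :=
  (tendsto_neg_atBot_atTop.comp Real.tendsto_log_nhdsGT_zero).const_div_atTop c

lemma log_natCast_le_log_add_max {a b₁ b₂ : ℕ} {K : ℝ} (hK : 1 ≤ K)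
    (h : (a : ℝ) ≤ K * max (b₁ : ℝ) b₂) :
    Real.log a ≤ Real.log K + max (Real.log b₁) (Real.log b₂) := by
  rcases Nat.eq_zero_or_pos a with rfl | ha
  · simpa using add_nonneg (Real.log_nonneg hK) (le_max_of_le_left (Real.log_natCast_nonneg b₁))
  have key : ∀ b : ℕ, (a : ℝ) ≤ K * b → Real.log a ≤ Real.log K + Real.log b := fun b hb => by
    have hb0 : (b : ℝ) ≠ 0 := by
      rintro hb0
      rw [hb0, mul_zero] at hb
      exact (Nat.cast_pos.2 ha).not_ge hb
    rw [← Real.log_mul (by positivity) hb0]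
    exact Real.log_le_log (Nat.cast_pos.2 ha) hb
  rcases le_total b₁ b₂ with hb | hb
  · rw [max_eq_right (Nat.cast_le.2 hb)] at h
    linarith [key b₂ h, le_max_right (Real.log b₁) (Real.log b₂)]
  · rw [max_eq_left (Nat.cast_le.2 hb)] at h
    linarith [key b₁ h, le_max_left (Real.log b₁) (Real.log b₂)]

lemma upperBoxDim_le_max_of_coverNum_le {E : Set α} {F₁ : Set β} {F₂ : Set γ} {K : ℝ}
    (hK : 1 ≤ K) (h₁ : IsBoundedUnder (· ≤ ·) (𝓝[>] 0) (coverRatio F₁))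
    (h₂ : IsBoundedUnder (· ≤ ·) (𝓝[>] 0) (coverRatio F₂))
    (hE : ∀ᶠ δ in 𝓝[>] 0, (coverNum E δ : ℝ) ≤ K * max (coverNum F₁ δ : ℝ) (coverNum F₂ δ)) :
    upperBoxDim E ≤ max (upperBoxDim F₁) (upperBoxDim F₂) := by
  have hratio : ∀ᶠ δ in 𝓝[>] 0, coverRatio E δ ≤
      Real.log K / -Real.log δ + max (coverRatio F₁ δ) (coverRatio F₂ δ) := by
    filter_upwards [hE, Ioo_mem_nhdsGT one_pos] with δ hδ ⟨h0, h1⟩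
    have hlog : 0 < -Real.log δ := neg_pos.2 (Real.log_neg h0 h1)
    rw [coverRatio, coverRatio, coverRatio, max_div_div_right hlog.le, ← add_div]
    exact div_le_div_of_nonneg_right (log_natCast_le_log_add_max hK hδ) hlog.le
  have hcobdd : IsCoboundedUnder (· ≤ ·) (𝓝[>] 0) (coverRatio E) :=
    isCoboundedUnder_le_of_eventually_le _ (x := 0) <| by
      filter_upwards [Ioo_mem_nhdsGT one_pos] with δ hδ using
        coverRatio_nonneg E hδ.1.le hδ.2.le
  refine le_of_forall_pos_le_add fun ε hε => limsup_le_of_le hcobdd ?_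
  filter_upwards [hratio,
    (tendsto_div_neg_log_nhdsGT_zero (Real.log K)).eventually (gt_mem_nhds (half_pos hε)),
    eventually_lt_of_limsup_lt (lt_add_of_pos_right (upperBoxDim F₁) (half_pos hε)) h₁,
    eventually_lt_of_limsup_lt (lt_add_of_pos_right (upperBoxDim F₂) (half_pos hε)) h₂]
    with δ hδ hK' hδ₁ hδ₂
  calc coverRatio E δ ≤ _ := hδ
    _ ≤ ε / 2 + max (upperBoxDim F₁ + ε / 2) (upperBoxDim F₂ + ε / 2) :=
        add_le_add hK'.le (max_le_max hδ₁.le hδ₂.le)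
    _ = max (upperBoxDim F₁) (upperBoxDim F₂) + ε := by rw [max_add_add_right]; ring

lemma isBoundedUnder_coverRatio_of_coverNum_le {F : Set α} {c : ℝ} {k : ℕ}
    (h : ∀ᶠ δ in 𝓝[>] 0, (coverNum F δ : ℝ) ≤ c / δ ^ k) :
    IsBoundedUnder (· ≤ ·) (𝓝[>] 0) (coverRatio F) := by
  refine ⟨k + 1, eventually_map.2 ?_⟩
  filter_upwards [h, Ioo_mem_nhdsGT one_pos,
    (tendsto_div_neg_log_nhdsGT_zero (Real.log c)).eventually (gt_mem_nhds one_pos)]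
    with δ hN ⟨h0, h1⟩ hc
  have hlog : 0 < -Real.log δ := neg_pos.2 (Real.log_neg h0 h1)
  rcases Nat.eq_zero_or_pos (coverNum F δ) with hN0 | hpos
  · simp only [coverRatio, hN0, Nat.cast_zero, Real.log_zero, zero_div]
    positivity
  have hc0 : 0 < c := by
    have : (0 : ℝ) < c / δ ^ k := (Nat.cast_pos.2 hpos).trans_le hN
    exact (div_pos_iff_of_pos_right (by positivity)).1 this
  have hlogN : Real.log (coverNum F δ) ≤ Real.log c + k * -Real.log δ :=
    calc Real.log (coverNum F δ) ≤ Real.log (c / δ ^ k) :=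
          Real.log_le_log (Nat.cast_pos.2 hpos) hN
      _ = Real.log c + k * -Real.log δ := by
          rw [Real.log_div hc0.ne' (by positivity), Real.log_pow]; ring
  rw [div_lt_iff₀ hlog] at hc
  rw [coverRatio, div_le_iff₀ hlog]
  linarith

end BoxDim

lemma inv_natCeil_inv_le {δ : ℝ} (hδ : 0 < δ) : (⌈δ⁻¹⌉₊ : ℝ)⁻¹ ≤ δ :=
  inv_le_of_inv_le₀ hδ (Nat.le_ceil _)

lemma natCeil_inv_mul_le_two {δ : ℝ} (h0 : 0 < δ) (h1 : δ ≤ 1) : (⌈δ⁻¹⌉₊ : ℝ) * δ ≤ 2 := by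
  have := Nat.ceil_lt_add_one (inv_nonneg.2 h0.le)
  calc (⌈δ⁻¹⌉₊ : ℝ) * δ ≤ (δ⁻¹ + 1) * δ := by gcongr
    _ = 1 + δ := by field_simp
    _ ≤ 2 := by linarith

lemma isBoundedUnder_coverRatio_graph {u : ℝ → ℝ} (hu : ContinuousOn u (Icc 0 1)) :
    IsBoundedUnder (· ≤ ·) (𝓝[>] 0) (coverRatio (G u)) := by
  set D := diam (u '' Icc 0 1)
  have hD : 0 ≤ D := diam_nonneg
  refine isBoundedUnder_coverRatio_of_coverNum_le (c := D + 2) (k := 2) ?_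
  filter_upwards [Ioc_mem_nhdsGT one_pos] with δ ⟨h0, h1⟩
  set n := ⌈δ⁻¹⌉₊
  have hn : 0 < n := Nat.ceil_pos.2 (inv_pos.2 h0)
  have hterm : ∀ i ∈ Finset.range n, diam (u '' column n i) / (2 * δ) + 1 ≤ D / (2 * δ) + 1 :=
    fun i hi => by
      gcongr
      exact diam_mono (image_mono (column_subset_Icc (Finset.mem_range.1 hi)))
        (isCompact_Icc.image_of_continuousOn hu).isBounded
  calc (coverNum (G u) δ : ℝ) ≤ oscSum u n δ :=
        coverNum_graph_le_oscSum hu hn h0 (by linarith [inv_natCeil_inv_le h0])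
    _ ≤ n * (D / (2 * δ) + 1) := (Finset.sum_le_card_nsmul _ _ _ hterm).trans_eq
        (by rw [Finset.card_range, nsmul_eq_mul])
    _ ≤ 2 / δ * (D / (2 * δ) + 1) := by
        gcongr
        rw [le_div_iff₀ h0]; exact natCeil_inv_mul_le_two h0 h1
    _ = (D + 2 * δ) / δ ^ 2 := by field_simp
    _ ≤ (D + 2) / δ ^ 2 := by gcongr; linarith

lemma diam_image_le_of_abs_sub_le {s : Set ℝ} {u v w : ℝ → ℝ} {C : ℝ} (hC : 0 ≤ C)
    (hu : Bornology.IsBounded (u '' s)) (hv : Bornology.IsBounded (v '' s))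
    (h : ∀ x ∈ s, ∀ y ∈ s, |w x - w y| ≤ C * (|u x - u y| + |v x - v y|)) :
    diam (w '' s) ≤ C * (diam (u '' s) + diam (v '' s)) := by
  refine diam_le_of_forall_dist_le (by positivity) ?_
  rintro _ ⟨x, hx, rfl⟩ _ ⟨y, hy, rfl⟩
  rw [Real.dist_eq]
  refine (h x hx y hy).trans ?_
  gcongr
  · exact Real.dist_eq (u x) (u y) ▸ dist_le_diam_of_mem hu (mem_image_of_mem u hx)
      (mem_image_of_mem u hy)
  · exact Real.dist_eq (v x) (v y) ▸ dist_le_diam_of_mem hv (mem_image_of_mem v hx)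
      (mem_image_of_mem v hy)

lemma coverNum_graph_le_of_abs_sub_le {u v w : ℝ → ℝ} (hu : ContinuousOn u (Icc 0 1))
    (hv : ContinuousOn v (Icc 0 1)) (hw : ContinuousOn w (Icc 0 1)) {C : ℝ} (hC : 1 ≤ C)
    (h : ∀ x ∈ Icc (0 : ℝ) 1, ∀ y ∈ Icc (0 : ℝ) 1,
      |w x - w y| ≤ C * (|u x - u y| + |v x - v y|))
    {δ : ℝ} (h0 : 0 < δ) (h1 : δ ≤ 1) :
    (coverNum (G w) δ : ℝ) ≤ 24 * C * max (coverNum (G u) δ : ℝ) (coverNum (G v) δ) := by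
  set n := ⌈δ⁻¹⌉₊
  have hn : 0 < n := Nat.ceil_pos.2 (inv_pos.2 h0)
  have hnδ := natCeil_inv_mul_le_two h0 h1
  have hcolumn : ∀ i ∈ Finset.range n, diam (w '' column n i) / (2 * δ) + 1 ≤
      C * ((diam (u '' column n i) / (2 * δ) + 1) + (diam (v '' column n i) / (2 * δ) + 1)) := by
    intro i hi
    have hi := Finset.mem_range.1 hi
    have hdiam := diam_image_le_of_abs_sub_le (by linarith) (isBounded_image_column hu hi)
      (isBounded_image_column hv hi) fun x hx y hy =>
        h x (column_subset_Icc hi hx) y (column_subset_Icc hi hy)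
    have hdiv : diam (w '' column n i) / (2 * δ) ≤
        C * (diam (u '' column n i) / (2 * δ) + diam (v '' column n i) / (2 * δ)) := by
      rw [← add_div, ← mul_div_assoc]; gcongr
    have hu0 : 0 ≤ diam (u '' column n i) / (2 * δ) := by positivity
    have hv0 : 0 ≤ diam (v '' column n i) / (2 * δ) := by positivity
    nlinarith
  calc (coverNum (G w) δ : ℝ) ≤ oscSum w n δ :=
        coverNum_graph_le_oscSum hw hn h0 (by linarith [inv_natCeil_inv_le h0])
    _ ≤ C * (oscSum u n δ + oscSum v n δ) := by
        rw [oscSum, oscSum, oscSum, ← Finset.sum_add_distrib, Finset.mul_sum]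
        exact Finset.sum_le_sum hcolumn
    _ ≤ C * (12 * coverNum (G u) δ + 12 * coverNum (G v) δ) := by
        gcongr
        exacts [oscSum_le_coverNum_graph hu hn h0 hnδ, oscSum_le_coverNum_graph hv hn h0 hnδ]
    _ ≤ 24 * C * max (coverNum (G u) δ : ℝ) (coverNum (G v) δ) := by
        nlinarith [le_max_left (coverNum (G u) δ : ℝ) (coverNum (G v) δ),
          le_max_right (coverNum (G u) δ : ℝ) (coverNum (G v) δ)]

theorem upperBoxDim_graph_le_max_of_abs_sub_le {u v w : ℝ → ℝ} (hu : ContinuousOn u (Icc 0 1))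
    (hv : ContinuousOn v (Icc 0 1)) (hw : ContinuousOn w (Icc 0 1)) {C : ℝ}
    (h : ∀ x ∈ Icc (0 : ℝ) 1, ∀ y ∈ Icc (0 : ℝ) 1,
      |w x - w y| ≤ C * (|u x - u y| + |v x - v y|)) :
    upperBoxDim (G w) ≤ max (upperBoxDim (G u)) (upperBoxDim (G v)) := by
  have h' : ∀ x ∈ Icc (0 : ℝ) 1, ∀ y ∈ Icc (0 : ℝ) 1,
      |w x - w y| ≤ max C 1 * (|u x - u y| + |v x - v y|) := fun x hx y hy =>
    (h x hx y hy).trans (by gcongr; exact le_max_left _ _)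
  refine upperBoxDim_le_max_of_coverNum_le (K := 24 * max C 1) (by linarith [le_max_right C 1])
    (isBoundedUnder_coverRatio_graph hu) (isBoundedUnder_coverRatio_graph hv) ?_
  filter_upwards [Ioc_mem_nhdsGT one_pos] with δ ⟨h0, h1⟩ using
    coverNum_graph_le_of_abs_sub_le hu hv hw (le_max_right C 1) h' h0 h1

lemma abs_sub_le_abs_mul_sub_div_add {a b p q m B : ℝ} (hm : 0 < m) (ha : m ≤ |a|) (hb : m ≤ |b|)
    (hB : |a * p| ≤ B) : |p - q| ≤ |a * p - b * q| / m + B * |a - b| / m ^ 2 := by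
  have ha0 : a ≠ 0 := abs_pos.1 (hm.trans_le ha)
  have hb0 : b ≠ 0 := abs_pos.1 (hm.trans_le hb)
  have hsplit : p - q = (a * p - b * q) / b + a * p * (b - a) / (a * b) := by
    field_simp; ring
  have hB0 : 0 ≤ B := (abs_nonneg _).trans hB
  calc |p - q| ≤ |(a * p - b * q) / b| + |a * p * (b - a) / (a * b)| := hsplit ▸ abs_add_le _ _
    _ = |a * p - b * q| / |b| + |a * p| * |a - b| / (|a| * |b|) := by
        rw [abs_div, abs_div, abs_mul (a * p), abs_mul a b, abs_sub_comm b a]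
    _ ≤ |a * p - b * q| / m + B * |a - b| / m ^ 2 := by
        rw [sq]; gcongr

theorem upperBoxDim_graph_factor (f g : ℝ → ℝ)
    (hf : ContinuousOn f (Set.Icc 0 1)) (hg : ContinuousOn g (Set.Icc 0 1))
    (hne : ∀ x ∈ Set.Icc (0:ℝ) 1, f x ≠ 0) :
    upperBoxDim (G g) ≤ max (upperBoxDim (G (f * g))) (upperBoxDim (G f)) := by
  have hfg : ContinuousOn (f * g) (Icc 0 1) := hf.mul hg
  obtain ⟨x₀, hx₀, hmin⟩ := isCompact_Icc.exists_isMinOn (nonempty_Icc.2 zero_le_one) hf.abs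
  obtain ⟨x₁, -, hmax⟩ := isCompact_Icc.exists_isMaxOn (nonempty_Icc.2 zero_le_one) hfg.abs
  set m := |f x₀|
  set B := |(f * g) x₁|
  have hm : 0 < m := abs_pos.2 (hne x₀ hx₀)
  refine upperBoxDim_graph_le_max_of_abs_sub_le hfg hf hg (C := max (1 / m) (B / m ^ 2))
    fun x hx y hy => ?_
  calc |g x - g y| ≤ |f x * g x - f y * g y| / m + B * |f x - f y| / m ^ 2 :=
        abs_sub_le_abs_mul_sub_div_add hm (hmin hx) (hmin hy) (hmax hx)
    _ = 1 / m * |(f * g) x - (f * g) y| + B / m ^ 2 * |f x - f y| := by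
        simp only [Pi.mul_apply]; ring
    _ ≤ max (1 / m) (B / m ^ 2) * (|(f * g) x - (f * g) y| + |f x - f y|) := by
        rw [mul_add]
        gcongr
        exacts [le_max_left _ _, le_max_right _ _]
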